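/- With K(m) = m·N + Δ(m) as above (N SPSD with simple zero eigenvalue and unit eigenvector e, Δ(m) = Δ^∞ + O(m⁻¹), η = eᵀΔ^∞e > 0), and matrices B(m) = B^∞ + O(m⁻¹), C(m) = C^∞ + O(m⁻¹): the product C(m)·K(m)^{-1} satisfies C(m) K(m)^{-1} = (C^∞ e)·η^{-1}·eᵀ + O(m⁻¹) in spectral norm as m → ∞. -/

import Mathlib

/-!
With `P = e eᵀ`, the matrix `N + P` is invertible and `N (N + P)⁻¹ = 1 - P`. Using `N P = 0` and
`P Δ^∞ P = η P`, the ansatz `R(m) = η⁻¹ P + m⁻¹ (N + P)⁻¹ (1 - η⁻¹ Δ^∞ P)` is an approximate right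
inverse of `K(m) = m N + Δ(m)`: `K(m) R(m) = 1 + E(m)` with `E(m) = O(m⁻¹)`. In the Banach algebra of
matrices `(1 + E(m))⁻¹ = 1 + O(m⁻¹)`, hence `K(m)⁻¹ = R(m) (1 + E(m))⁻¹ = η⁻¹ P + O(m⁻¹)`, and
multiplying by `C(m) = C^∞ + O(m⁻¹)` gives the claim.
-/

open Matrix Asymptotics Filter Topology
open scoped Matrix.Norms.L2Operator

theorem isBigO_inv_atTop_iff {E : Type*} [SeminormedAddCommGroup E] {f : ℝ → E} :
    f =O[atTop] (fun m : ℝ => m⁻¹) ↔ ∃ C M : ℝ, ∀ m ≥ M, ‖f m‖ ≤ C / m := by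
  rw [isBigO_iff]
  constructor
  · rintro ⟨C, hC⟩
    obtain ⟨M, hM⟩ := eventually_atTop.mp (hC.and (eventually_gt_atTop 0))
    refine ⟨C, M, fun m hm => ?_⟩
    obtain ⟨hfm, hm0⟩ := hM m hm
    rwa [norm_inv, Real.norm_of_nonneg hm0.le, ← div_eq_mul_inv] at hfm
  · rintro ⟨C, M, hCM⟩
    refine ⟨C, ?_⟩
    filter_upwards [eventually_ge_atTop M, eventually_gt_atTop 0] with m hm hm0
    rw [norm_inv, Real.norm_of_nonneg hm0.le, ← div_eq_mul_inv]
    exact hCM m hm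

theorem Asymptotics.IsBigO.matrix_mul {α 𝕜 l m n : Type*} [RCLike 𝕜] [Fintype l] [Fintype m]
    [DecidableEq m] [Fintype n] [DecidableEq n] {f : Filter α}
    {A : α → Matrix l m 𝕜} {B : α → Matrix m n 𝕜} {u v : α → ℝ}
    (hA : A =O[f] u) (hB : B =O[f] v) : (fun x => A x * B x) =O[f] (fun x => u x * v x) := by
  obtain ⟨c, hc⟩ := hA.bound
  obtain ⟨d, hd⟩ := hB.bound
  refine .of_bound (c * d) ?_
  filter_upwards [hc, hd] with x hcx hdx
  calc ‖A x * B x‖ ≤ ‖A x‖ * ‖B x‖ := l2_opNorm_mul _ _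
    _ ≤ (c * ‖u x‖) * (d * ‖v x‖) :=
        mul_le_mul hcx hdx (norm_nonneg _) ((norm_nonneg _).trans hcx)
    _ = c * d * ‖u x * v x‖ := by rw [norm_mul]; ring

section BanachAlgebra

variable {α R : Type*} [NormedRing R] [HasSummableGeomSeries R] {f : Filter α} {E : α → R}

theorem eventually_isUnit_one_add (hE : Tendsto E f (𝓝 0)) : ∀ᶠ x in f, IsUnit (1 + E x) := by
  have h1 : Tendsto (fun x => 1 + E x) f (𝓝 1) := by simpa using tendsto_const_nhds.add hE
  exact h1.eventually (Units.isOpen.mem_nhds isUnit_one)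

theorem isBigO_mul_inverse_one_add_sub {X : α → R} (hX : X =O[f] (fun _ => (1 : ℝ)))
    (hE : Tendsto E f (𝓝 0)) :
    (fun x => X x * Ring.inverse (1 + E x) - X x) =O[f] E := by
  have hinv : (fun x => Ring.inverse (1 + E x) - 1) =O[f] (fun x => ‖E x‖) := by
    simpa [Function.comp_def] using
      (NormedRing.inverse_add_norm_diff_first_order (1 : Rˣ)).comp_tendsto hE
  simpa [mul_sub] using (hX.mul hinv).norm_right

end BanachAlgebra

theorem Matrix.isBigO_inv_sub_of_mul_eq_one_add {α ι 𝕜 : Type*} [Fintype ι] [DecidableEq ι]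
    [RCLike 𝕜] {f : Filter α} {K R E : α → Matrix ι ι 𝕜} {g : α → ℝ}
    (hKR : ∀ᶠ x in f, K x * R x = 1 + E x) (hR : R =O[f] (fun _ => (1 : ℝ)))
    (hE : E =O[f] g) (hg : Tendsto g f (𝓝 0)) :
    (fun x => (K x)⁻¹ - R x) =O[f] g := by
  have hEt : Tendsto E f (𝓝 0) := hE.trans_tendsto hg
  have hKinv : ∀ᶠ x in f, (K x)⁻¹ = R x * Ring.inverse (1 + E x) := by
    filter_upwards [hKR, eventually_isUnit_one_add hEt] with x hx hunit
    apply inv_eq_right_inv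
    rw [← mul_assoc, hx, Ring.mul_inverse_cancel _ hunit]
  refine EventuallyEq.trans_isBigO ?_ ((isBigO_mul_inverse_one_add_sub hR hEt).trans hE)
  filter_upwards [hKinv] with x hx
  rw [hx]

theorem mul_smul_add_inv_smul_eq {𝕜 A : Type*} [Field 𝕜] [Ring A] [Algebra 𝕜 A]
    {N P T D D' : A} {η m : 𝕜} (hNP : N * P = 0) (hNT : N * T = 1 - η⁻¹ • (D' * P))
    (hm : m ≠ 0) :
    (m • N + D) * (η⁻¹ • P + m⁻¹ • T) = 1 + (η⁻¹ • ((D - D') * P) + m⁻¹ • (D * T)) := by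
  calc (m • N + D) * (η⁻¹ • P + m⁻¹ • T)
      = (m * η⁻¹) • (N * P) + (m * m⁻¹) • (N * T) + η⁻¹ • (D * P) + m⁻¹ • (D * T) := by
        simp only [add_mul, mul_add, smul_mul_assoc, mul_smul_comm]
        module
    _ = 1 + (η⁻¹ • ((D - D') * P) + m⁻¹ • (D * T)) := by
        rw [hNP, hNT, mul_inv_cancel₀ hm, one_smul, smul_zero, sub_mul, smul_sub]
        abel

section RankOneCorrection

variable {ι 𝕜 : Type*} [Fintype ι] [Field 𝕜] {N : Matrix ι ι 𝕜} {e : ι → 𝕜}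

theorem vecMulVec_mul_mul_vecMulVec_self (D : Matrix ι ι 𝕜) :
    vecMulVec e e * D * vecMulVec e e = (e ⬝ᵥ D *ᵥ e) • vecMulVec e e := by
  rw [vecMulVec_mul, vecMulVec_mul_vecMulVec, dotProduct_mulVec, vecMulVec_smul]

variable [DecidableEq ι]

theorem isUnit_add_vecMulVec_self (he : e ⬝ᵥ e = 1) (hleft : e ᵥ* N = 0)
    (hsimple : ∀ x, N *ᵥ x = 0 → ∃ c : 𝕜, x = c • e) : IsUnit (N + vecMulVec e e) := by
  refine mulVec_injective_iff_isUnit.mp fun x y hxy => sub_eq_zero.mp ?_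
  set v := x - y
  have hv : N *ᵥ v + (e ⬝ᵥ v) • e = 0 := by
    have hMv : (N + vecMulVec e e) *ᵥ v = 0 := by rw [mulVec_sub, hxy, sub_self]
    simpa only [add_mulVec, vecMulVec_mulVec, op_smul_eq_smul] using hMv
  have hev : e ⬝ᵥ v = 0 := by
    simpa [dotProduct_add, dotProduct_smul, dotProduct_mulVec, hleft, he] using
      congrArg (e ⬝ᵥ ·) hv
  obtain ⟨c, hc⟩ := hsimple v (by simpa [hev] using hv)
  rw [hc, dotProduct_smul, he, smul_eq_mul, mul_one] at hev
  rw [hc, hev, zero_smul]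

theorem mul_inv_add_vecMulVec_self (he : e ⬝ᵥ e = 1) (hleft : e ᵥ* N = 0)
    (hsimple : ∀ x, N *ᵥ x = 0 → ∃ c : 𝕜, x = c • e) :
    N * (N + vecMulVec e e)⁻¹ = 1 - vecMulVec e e := by
  have hdet := (isUnit_iff_isUnit_det _).mp (isUnit_add_vecMulVec_self he hleft hsimple)
  have hPM : vecMulVec e e * (N + vecMulVec e e) = vecMulVec e e := by
    rw [mul_add, vecMulVec_mul, hleft, vecMulVec_zero, zero_add, vecMulVec_mul_vecMulVec, he,
      one_smul]
  calc N * (N + vecMulVec e e)⁻¹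
      = (N + vecMulVec e e) * (N + vecMulVec e e)⁻¹ - vecMulVec e e * (N + vecMulVec e e)⁻¹ := by
        rw [← sub_mul, add_sub_cancel_right]
    _ = 1 - vecMulVec e e := by
        have hPMinv : vecMulVec e e * (N + vecMulVec e e)⁻¹ = vecMulVec e e :=
          calc _ = vecMulVec e e * (N + vecMulVec e e) * (N + vecMulVec e e)⁻¹ := by rw [hPM]
            _ = _ := mul_nonsing_inv_cancel_right _ _ hdet
        rw [mul_nonsing_inv _ hdet, hPMinv]

theorem mul_inv_add_vecMulVec_self_mul_one_sub (he : e ⬝ᵥ e = 1) (hleft : e ᵥ* N = 0)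
    (hsimple : ∀ x, N *ᵥ x = 0 → ∃ c : 𝕜, x = c • e) {D : Matrix ι ι 𝕜} {η : 𝕜}
    (hη : e ⬝ᵥ D *ᵥ e = η) (hη0 : η ≠ 0) :
    N * ((N + vecMulVec e e)⁻¹ * (1 - η⁻¹ • (D * vecMulVec e e))) =
      1 - η⁻¹ • (D * vecMulVec e e) := by
  have hPDP : vecMulVec e e * (D * vecMulVec e e) = η • vecMulVec e e := by
    rw [← mul_assoc, vecMulVec_mul_mul_vecMulVec_self, hη]
  rw [← mul_assoc, mul_inv_add_vecMulVec_self he hleft hsimple, sub_mul, one_mul, mul_sub,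
    mul_one, mul_smul_comm, hPDP, smul_smul, inv_mul_cancel₀ hη0, one_smul]
  abel

end RankOneCorrection

theorem isBigO_inv_smul_add_sub {ι : Type*} [Fintype ι] [DecidableEq ι]
    {N Δinf : Matrix ι ι ℝ} {Δ : ℝ → Matrix ι ι ℝ} {e : ι → ℝ} {η : ℝ}
    (he : e ⬝ᵥ e = 1) (hker : N *ᵥ e = 0) (hleft : e ᵥ* N = 0)
    (hsimple : ∀ x, N *ᵥ x = 0 → ∃ c : ℝ, x = c • e)
    (hΔ : (fun m => Δ m - Δinf) =O[atTop] (fun m : ℝ => m⁻¹))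
    (hη : e ⬝ᵥ Δinf *ᵥ e = η) (hη0 : η ≠ 0) :
    (fun m : ℝ => (m • N + Δ m)⁻¹ - η⁻¹ • vecMulVec e e) =O[atTop] (fun m : ℝ => m⁻¹) := by
  set P := vecMulVec e e
  set T := (N + P)⁻¹ * (1 - η⁻¹ • (Δinf * P))
  have hNP : N * P = 0 := by rw [mul_vecMulVec, hker, zero_vecMulVec]
  have hNT : N * T = 1 - η⁻¹ • (Δinf * P) :=
    mul_inv_add_vecMulVec_self_mul_one_sub he hleft hsimple hη hη0
  have hΔ_bdd : Δ =O[atTop] (fun _ => (1 : ℝ)) := 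
    (tendsto_sub_nhds_zero_iff.mp (hΔ.trans_tendsto tendsto_inv_atTop_zero)).isBigO_one ℝ
  have hT : (fun m : ℝ => m⁻¹ • T) =O[atTop] (fun m : ℝ => m⁻¹) := by
    simpa using (isBigO_refl (fun m : ℝ => m⁻¹) atTop).smul (isBigO_const_one ℝ T atTop)
  have hE : (fun m => η⁻¹ • ((Δ m - Δinf) * P) + m⁻¹ • (Δ m * T)) =O[atTop]
      (fun m : ℝ => m⁻¹) := by
    have h1 : (fun m => η⁻¹ • ((Δ m - Δinf) * P)) =O[atTop] (fun m : ℝ => m⁻¹) := by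
      simpa [Pi.smul_def] using (hΔ.mul (isBigO_const_one ℝ P atTop)).const_smul_left η⁻¹
    have h2 : (fun m : ℝ => m⁻¹ • (Δ m * T)) =O[atTop] (fun m : ℝ => m⁻¹) := by
      simpa using (isBigO_refl (fun m : ℝ => m⁻¹) atTop).smul
        (hΔ_bdd.mul (isBigO_const_one ℝ T atTop))
    exact h1.add h2
  have hR : (fun m : ℝ => η⁻¹ • P + m⁻¹ • T) =O[atTop] (fun _ => (1 : ℝ)) :=
    (tendsto_const_nhds.add (tendsto_inv_atTop_zero.smul_const T)).isBigO_one ℝ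
  have hKR : ∀ᶠ m in atTop, (m • N + Δ m) * (η⁻¹ • P + m⁻¹ • T) =
      1 + (η⁻¹ • ((Δ m - Δinf) * P) + m⁻¹ • (Δ m * T)) := by
    filter_upwards [eventually_ne_atTop 0] with m hm
    exact mul_smul_add_inv_smul_eq hNP hNT hm
  simpa [sub_add_eq_sub_sub] using
    (isBigO_inv_sub_of_mul_eq_one_add hKR hR hE tendsto_inv_atTop_zero).add hT

theorem coupling_inverse_asymptotics_general {n p : ℕ}
    (N Δinf : Matrix (Fin n) (Fin n) ℝ) (Δ : ℝ → Matrix (Fin n) (Fin n) ℝ)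
    (hN : N.PosSemidef) (e : Fin n → ℝ) (he : e ⬝ᵥ e = 1)
    (hker : N.mulVec e = 0)
    (hsimple : ∀ x, N.mulVec x = 0 → ∃ c : ℝ, x = c • e)
    (hΔ : ∃ C M : ℝ, ∀ m ≥ M, ‖Δ m - Δinf‖ ≤ C / m)
    (K : ℝ → Matrix (Fin n) (Fin n) ℝ) (hK : ∀ m, K m = m • N + Δ m)
    (η : ℝ) (hη : η = e ⬝ᵥ Δinf.mulVec e) (hηpos : 0 < η)
    (Cm : ℝ → Matrix (Fin p) (Fin n) ℝ) (Cinf : Matrix (Fin p) (Fin n) ℝ)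
    (hC : ∃ C M : ℝ, ∀ m ≥ M, ‖Cm m - Cinf‖ ≤ C / m) :
    ∃ C M : ℝ, ∀ m ≥ M,
      ‖Cm m * (K m)⁻¹ - η⁻¹ • Matrix.vecMulVec (Cinf.mulVec e) e‖ ≤ C / m := by
  have hleft : e ᵥ* N = 0 := by
    rw [← mulVec_transpose, ← conjTranspose_eq_transpose_of_trivial, hN.isHermitian.eq, hker]
  have hKinv := isBigO_inv_smul_add_sub he hker hleft hsimple (isBigO_inv_atTop_iff.mpr hΔ)
    hη.symm hηpos.ne'
  simp only [← hK] at hKinv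
  have hCm := isBigO_inv_atTop_iff.mpr hC
  have hC_bdd : Cm =O[atTop] (fun _ => (1 : ℝ)) := 
    (tendsto_sub_nhds_zero_iff.mp (hCm.trans_tendsto tendsto_inv_atTop_zero)).isBigO_one ℝ
  have hsplit : ∀ m, Cm m * (K m)⁻¹ - η⁻¹ • vecMulVec (Cinf *ᵥ e) e =
      Cm m * ((K m)⁻¹ - η⁻¹ • vecMulVec e e) + η⁻¹ • ((Cm m - Cinf) * vecMulVec e e) := by
    intro m
    rw [← mul_vecMulVec, Matrix.mul_sub, Matrix.sub_mul, Matrix.mul_smul, smul_sub]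
    abel
  refine isBigO_inv_atTop_iff.mp ?_
  simp only [hsplit]
  have h1 : (fun m => Cm m * ((K m)⁻¹ - η⁻¹ • vecMulVec e e)) =O[atTop] (fun m : ℝ => m⁻¹) := by
    simpa using hC_bdd.matrix_mul hKinv
  have h2 : (fun m => η⁻¹ • ((Cm m - Cinf) * vecMulVec e e)) =O[atTop] (fun m : ℝ => m⁻¹) := by
    simpa [Pi.smul_def] using
      (hCm.matrix_mul (isBigO_const_one ℝ (vecMulVec e e) atTop)).const_smul_left η⁻¹
  exact h1.add h2

theorem coupling_inverse_asymptotics {n p q : ℕ}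
    (N Δinf : Matrix (Fin n) (Fin n) ℝ) (Δ : ℝ → Matrix (Fin n) (Fin n) ℝ)
    (hN : N.PosSemidef) (e : Fin n → ℝ) (he : e ⬝ᵥ e = 1)
    (hker : N.mulVec e = 0)
    (hsimple : ∀ x, N.mulVec x = 0 → ∃ c : ℝ, x = c • e)
    (hΔsym : ∀ m, (Δ m).IsHermitian)
    (hΔ : ∃ C M : ℝ, ∀ m ≥ M, ‖Δ m - Δinf‖ ≤ C / m)
    (K : ℝ → Matrix (Fin n) (Fin n) ℝ) (hK : ∀ m, K m = m • N + Δ m)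
    (hinv : ∃ M₀ : ℝ, ∀ m ≥ M₀, IsUnit (K m).det)
    (η : ℝ) (hη : η = e ⬝ᵥ Δinf.mulVec e) (hηpos : 0 < η)
    (B : ℝ → Matrix (Fin n) (Fin q) ℝ) (Binf : Matrix (Fin n) (Fin q) ℝ)
    (hB : ∃ C M : ℝ, ∀ m ≥ M, ‖B m - Binf‖ ≤ C / m)
    (Cm : ℝ → Matrix (Fin p) (Fin n) ℝ) (Cinf : Matrix (Fin p) (Fin n) ℝ)
    (hC : ∃ C M : ℝ, ∀ m ≥ M, ‖Cm m - Cinf‖ ≤ C / m) :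
    ∃ C M : ℝ, ∀ m ≥ M,
      ‖Cm m * (K m)⁻¹ - η⁻¹ • Matrix.vecMulVec (Cinf.mulVec e) e‖ ≤ C / m :=
  coupling_inverse_asymptotics_general N Δinf Δ hN e he hker hsimple hΔ K hK η hη hηpos Cm Cinf hC
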